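/- arXiv:1603.08714 — 2 statements merged into one kernel-verified Lean document; each statement's English description precedes it below -/
import Mathlib

section
/- Every flat ABA+ framework satisfying the Axiom of Contraposition admits at least one <-preferred extension (a ⊆-maximal <-admissible set), via a Zorn's Lemma argument: the union of any ⊆-chain of <-admissible sets is <-admissible. -/
/-- A rule with a head and a (finite) body. A rule with empty body is a fact `head ← ⊤`. -/
structure ABARule (L : Type) where
  head : L
  body : List L

/-- Derivability (existence of a finite deduction tree) of a formula from a support set `S`
using rules in `Rs`: leaves are in `S` (or `⊤`, i.e. rules with empty body). -/
inductive Deduces {L : Type} (Rs : Set (ABARule L)) (S : Set L) : L → Prop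
  | assumption {φ : L} (h : φ ∈ S) : Deduces Rs S φ
  | rule {r : ABARule L} (hr : r ∈ Rs) (h : ∀ b ∈ r.body, Deduces Rs S b) :
      Deduces Rs S r.head

/-- An ABA⁺ framework: deductive system `(L, rules)`, non-empty set of assumptions,
total contrary map, and a preorder `le` on the assumptions. -/
structure ABAFramework (L : Type) where
  rules : Set (ABARule L)
  assumptions : Set L
  assumptions_nonempty : assumptions.Nonempty
  contrary : L → L
  le : L → L → Prop
  le_refl : ∀ a ∈ assumptions, le a a
  le_trans : ∀ a ∈ assumptions, ∀ b ∈ assumptions, ∀ c ∈ assumptions,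
      le a b → le b c → le a c

namespace ABAFramework

variable {L : Type}

/-- Strict part of the preference preorder. -/
def lt (F : ABAFramework L) (a b : L) : Prop := F.le a b ∧ ¬ F.le b a

/-- Standard (preference-free) ABA attack: some `A' ⊆ A` deduces the contrary of some `β ∈ B`. -/
def attacks (F : ABAFramework L) (A B : Set L) : Prop :=
  ∃ β ∈ B, ∃ A' ⊆ A, Deduces F.rules A' (F.contrary β)

/-- `<`-attack: normal attack or reverse attack. -/
def ltAttacks (F : ABAFramework L) (A B : Set L) : Prop :=
  (∃ β ∈ B, ∃ A' ⊆ A, Deduces F.rules A' (F.contrary β) ∧ ∀ α' ∈ A', ¬ F.lt α' β) ∨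
  (∃ α ∈ A, ∃ B' ⊆ B, Deduces F.rules B' (F.contrary α) ∧ ∃ β' ∈ B', F.lt β' α)

def conflictFree (F : ABAFramework L) (E : Set L) : Prop := ¬ F.attacks E E

def ltConflictFree (F : ABAFramework L) (E : Set L) : Prop := ¬ F.ltAttacks E E

def ltDefends (F : ABAFramework L) (E : Set L) (α : L) : Prop :=
  ∀ B ⊆ F.assumptions, F.ltAttacks B {α} → F.ltAttacks E B

def ltAdmissible (F : ABAFramework L) (E : Set L) : Prop :=
  E ⊆ F.assumptions ∧ F.ltConflictFree E ∧ ∀ α ∈ E, F.ltDefends E α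

def stable (F : ABAFramework L) (E : Set L) : Prop :=
  E ⊆ F.assumptions ∧ F.conflictFree E ∧
    ∀ β ∈ F.assumptions, β ∉ E → F.attacks E {β}

def ltStable (F : ABAFramework L) (E : Set L) : Prop :=
  E ⊆ F.assumptions ∧ F.ltConflictFree E ∧
    ∀ β ∈ F.assumptions, β ∉ E → F.ltAttacks E {β}

def ltComplete (F : ABAFramework L) (E : Set L) : Prop :=
  F.ltAdmissible E ∧ ∀ α ∈ F.assumptions, F.ltDefends E α → α ∈ E

def ltPreferred (F : ABAFramework L) (E : Set L) : Prop :=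
  F.ltAdmissible E ∧ ∀ E', F.ltAdmissible E' → E ⊆ E' → E' = E

def ltGrounded (F : ABAFramework L) (E : Set L) : Prop :=
  F.ltComplete E ∧ ∀ E', F.ltComplete E' → E' ⊆ E → E' = E

/-- `E` is `<`-admissible and contained in all `<`-preferred extensions. -/
def ltIdealCandidate (F : ABAFramework L) (E : Set L) : Prop :=
  F.ltAdmissible E ∧ ∀ P, F.ltPreferred P → E ⊆ P

def ltIdeal (F : ABAFramework L) (E : Set L) : Prop :=
  F.ltIdealCandidate E ∧ ∀ E', F.ltIdealCandidate E' → E ⊆ E' → E' = E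

/-- Flatness: no assumption is the head of any rule. -/
def Flat (F : ABAFramework L) : Prop := ∀ r ∈ F.rules, r.head ∉ F.assumptions

/-- Axiom of Contraposition. -/
def Contraposition (F : ABAFramework L) : Prop :=
  ∀ A' ⊆ F.assumptions, ∀ β ∈ F.assumptions,
    Deduces F.rules A' (F.contrary β) →
      ∀ α ∈ A', Deduces F.rules ((A' \ {α}) ∪ {β}) (F.contrary α)

/-- Axiom of Weak Contraposition. -/
def WeakContraposition (F : ABAFramework L) : Prop :=
  ∀ A' ⊆ F.assumptions, ∀ β ∈ F.assumptions,
    Deduces F.rules A' (F.contrary β) → (∃ α ∈ A', F.lt α β) →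
      ∃ α ∈ A', F.lt α β ∧ Deduces F.rules ((A' \ {α}) ∪ {β}) (F.contrary α)

/-- The `<`-defence operator `Def`. -/
def DefOp (F : ABAFramework L) (A : Set L) : Set L :=
  {α ∈ F.assumptions | F.ltDefends A α}

/-- Conclusions of a set `E`. -/
def Cn (F : ABAFramework L) (E : Set L) : Set L :=
  {φ | ∃ S ⊆ E, Deduces F.rules S φ}

end ABAFramework

open ABAFramework

/-! Deductions are finite trees, so every `<`-attack is witnessed by finitely many assumptions;
these all lie in a single member of a directed family, whose union is therefore `<`-conflict-free.
Defence passes to supersets, so the union of a chain of `<`-admissible sets is `<`-admissible,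
and Zorn's lemma yields a `<`-preferred extension. -/

namespace Deduces

variable {L : Type} {Rs : Set (ABARule L)} {S S' : Set L} {φ : L}

theorem mono (hS : S ⊆ S') (h : Deduces Rs S φ) : Deduces Rs S' φ := by
  induction h with
  | assumption h => exact .assumption (hS h)
  | rule hr _ ih => exact .rule hr ih

theorem exists_finite (h : Deduces Rs S φ) : ∃ T ⊆ S, T.Finite ∧ Deduces Rs T φ := by
  induction h with
  | @assumption φ h =>
    exact ⟨{φ}, Set.singleton_subset_iff.2 h, Set.finite_singleton φ, .assumption rfl⟩
  | @rule r hr _ ih =>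
    choose! T hTS hTfin hT using ih
    refine ⟨⋃ b ∈ r.body, T b, Set.iUnion₂_subset hTS, r.body.finite_toSet.biUnion hTfin, ?_⟩
    exact .rule hr fun b hb => (hT b hb).mono (Set.subset_biUnion_of_mem (u := T) hb)

end Deduces

namespace ABAFramework

variable {L : Type} (F : ABAFramework L)

variable {F} in
theorem ltAttacks.mono {A A' B B' : Set L} (hA : A ⊆ A') (hB : B ⊆ B') (h : F.ltAttacks A B) :
    F.ltAttacks A' B' := by
  rcases h with ⟨β, hβ, S, hS, hd, hlt⟩ | ⟨α, hα, S, hS, hd, hlt⟩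
  · exact .inl ⟨β, hB hβ, S, hS.trans hA, hd, hlt⟩
  · exact .inr ⟨α, hA hα, S, hS.trans hB, hd, hlt⟩

theorem not_ltAttacks_empty_right (A : Set L) : ¬ F.ltAttacks A ∅ := by
  rintro (⟨β, hβ, -⟩ | ⟨α, -, S, hS, -, β', hβ', -⟩)
  · exact hβ
  · exact hS hβ'

variable {F} in
theorem ltAttacks.exists_finite {A B : Set L} (h : F.ltAttacks A B) :
    ∃ A₀ ⊆ A, ∃ B₀ ⊆ B, A₀.Finite ∧ B₀.Finite ∧ F.ltAttacks A₀ B₀ := by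
  rcases h with ⟨β, hβ, S, hS, hd, hlt⟩ | ⟨α, hα, S, hS, hd, β', hβ', hlt⟩
  · obtain ⟨T, hTS, hTfin, hT⟩ := hd.exists_finite
    exact ⟨T, hTS.trans hS, {β}, Set.singleton_subset_iff.2 hβ, hTfin, Set.finite_singleton β,
      .inl ⟨β, rfl, T, subset_rfl, hT, fun α' hα' => hlt α' (hTS hα')⟩⟩
  · obtain ⟨T, hTS, hTfin, hT⟩ := hd.exists_finite
    refine ⟨{α}, Set.singleton_subset_iff.2 hα, insert β' T,
      Set.insert_subset (hS hβ') (hTS.trans hS), Set.finite_singleton α, hTfin.insert β', ?_⟩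
    exact .inr ⟨α, rfl, insert β' T, subset_rfl, hT.mono (Set.subset_insert β' T),
      β', Set.mem_insert β' T, hlt⟩

variable {F} in
theorem ltDefends.mono {E E' : Set L} {α : L} (hE : E ⊆ E') (h : F.ltDefends E α) :
    F.ltDefends E' α :=
  fun B hB hatt => (h B hB hatt).mono hE subset_rfl

theorem ltConflictFree_sUnion {C : Set (Set L)} (hC : DirectedOn (· ⊆ ·) C)
    (h : ∀ X ∈ C, F.ltConflictFree X) : F.ltConflictFree (⋃₀ C) := by
  intro hatt
  rcases C.eq_empty_or_nonempty with rfl | hne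
  · exact F.not_ltAttacks_empty_right ∅ (by simpa using hatt)
  obtain ⟨A₀, hA₀, B₀, hB₀, hA₀fin, hB₀fin, hatt₀⟩ := hatt.exists_finite
  obtain ⟨X, hXC, hX⟩ := hC.exists_mem_subset_of_finite_of_subset_sUnion hne
    (hA₀fin.union hB₀fin) (Set.union_subset hA₀ hB₀)
  exact h X hXC (hatt₀.mono (Set.subset_union_left.trans hX) (Set.subset_union_right.trans hX))

theorem ltAdmissible_sUnion {C : Set (Set L)} (hC : DirectedOn (· ⊆ ·) C)
    (h : ∀ X ∈ C, F.ltAdmissible X) : F.ltAdmissible (⋃₀ C) := by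
  refine ⟨Set.sUnion_subset fun X hX => (h X hX).1,
    F.ltConflictFree_sUnion hC fun X hX => (h X hX).2.1, ?_⟩
  rintro α ⟨X, hXC, hαX⟩
  exact ((h X hXC).2.2 α hαX).mono (Set.subset_sUnion_of_mem hXC)

theorem exists_ltPreferred : ∃ E, F.ltPreferred E := by
  obtain ⟨E, hE⟩ := zorn_subset {E : Set L | F.ltAdmissible E} fun C hC hchain =>
    ⟨⋃₀ C, F.ltAdmissible_sUnion hchain.directedOn hC, fun _ => Set.subset_sUnion_of_mem⟩
  exact ⟨E, hE.1, fun E' hE' hEE' => (hE.2 hE' hEE').antisymm hEE'⟩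

end ABAFramework

theorem stmt8_general {L : Type} (F : ABAFramework L) :
    (∀ C : Set (Set L), (∀ X ∈ C, F.ltAdmissible X) → IsChain (· ⊆ ·) C →
        F.ltAdmissible (⋃₀ C)) ∧
    (∃ E : Set L, F.ltPreferred E) :=
  ⟨fun _ hC hchain => F.ltAdmissible_sUnion hchain.directedOn hC, F.exists_ltPreferred⟩

theorem stmt8 {L : Type} (F : ABAFramework L) (hflat : F.Flat)
    (hcp : F.Contraposition) :
    (∀ C : Set (Set L), (∀ X ∈ C, F.ltAdmissible X) → IsChain (· ⊆ ·) C →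
        F.ltAdmissible (⋃₀ C)) ∧
    (∃ E : Set L, F.ltPreferred E) :=
  stmt8_general F
end

section
/- In any ABA+ framework, every <-stable extension is a <-complete extension: a <-stable extension contains every assumption it <-defends. -/
open ABAFramework

lemma ltAttacks_mono {L : Type} (F : ABAFramework L) {A A' B B' : Set L}
    (hA : A ⊆ A') (hB : B ⊆ B') (h : F.ltAttacks A B) : F.ltAttacks A' B' := by
  rcases h with ⟨β, hβ, S, hS, hd⟩ | ⟨α, hα, S, hS, hd⟩
  · exact Or.inl ⟨β, hB hβ, S, hS.trans hA, hd⟩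
  · exact Or.inr ⟨α, hA hα, S, hS.trans hB, hd⟩

theorem stmt11 {L : Type} (F : ABAFramework L) (E : Set L)
    (hE : F.ltStable E) : F.ltComplete E := by
  obtain ⟨hEsub, hcf, hatt⟩ := hE
  have hdef : ∀ α ∈ E, F.ltDefends E α := by
    intro α hα B hB hBα
    by_cases hBE : B ⊆ E
    · exact absurd (ltAttacks_mono F hBE (Set.singleton_subset_iff.mpr hα) hBα) hcf
    · obtain ⟨β, hβB, hβE⟩ := Set.not_subset.mp hBE
      exact ltAttacks_mono F (le_refl E) (Set.singleton_subset_iff.mpr hβB)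
        (hatt β (hB hβB) hβE)
  refine ⟨⟨hEsub, hcf, hdef⟩, ?_⟩
  intro α hα hdefα
  by_contra hαE
  exact hcf (hdefα E hEsub (hatt α hα hαE))
end
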